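/- There exists ε₀ > 0 such that for every ε with 0 < ε < ε₀ there exists γ ≥ 0 such that the pinned configuration space of (K_{3,3},l) with lengths a = ε, b = c = d = e = α = 1, f = β = √2 and l(v₂v₅) = γ — that is, the space of maps p : {v₁,…,v₆} → ℝ² with p(v₄)=(0,0), p(v₁)=(1,0), dist(p₁,p₆)=ε, dist(p₁,p₂)=1, dist(p₂,p₃)=1, dist(p₃,p₄)=1, dist(p₄,p₅)=1, dist(p₅,p₆)=√2, dist(p₁,p₄)=1, dist(p₃,p₆)=√2 and dist(p₂,p₅)=γ — has exactly six connected components. -/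

import Mathlib

/-- The pinned configuration space `C_{v₄,v₁}(K_{3,3}, l)`: realizations
`p : {v₁,…,v₆} → ℝ²` (vertex `vᵢ` is index `i-1`) of the weighted graph
`K_{3,3}` with edge lengths `a, b, c, d, e, f, α, β, γ` on the edges
`v₁v₆, v₁v₂, v₂v₃, v₃v₄, v₄v₅, v₅v₆, v₁v₄, v₃v₆, v₂v₅` respectively,
pinned by `p(v₄) = (0,0)` and `p(v₁) = (α,0)`. -/
def K33PinnedConfig (a b c d e f α β γ : ℝ) :
    Set (Fin 6 → EuclideanSpace ℝ (Fin 2)) :=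
  {p | p 3 = 0 ∧ p 0 = ![α, 0] ∧
    dist (p 0) (p 5) = a ∧ dist (p 0) (p 1) = b ∧ dist (p 1) (p 2) = c ∧
    dist (p 2) (p 3) = d ∧ dist (p 3) (p 4) = e ∧ dist (p 4) (p 5) = f ∧
    dist (p 0) (p 3) = α ∧ dist (p 2) (p 5) = β ∧ dist (p 1) (p 4) = γ}

/-!
Pin `v₄` at the origin and `v₁` at `(1, 0)`; then `v₆` runs over the circle of radius `ε` about
`v₁`. For each position `w` of `v₆`, each of `v₃` and `v₅` is one of the two points of the unit
circle at distance `√2` from `w`, and for `w` near `(1, 0)` these lie on opposite sides of the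
x-axis. The vertex `v₂` lies on the unit circles about `v₁` and `v₃`, so it is either `v₄` or the
fourth vertex `v₁ + v₃` of a rhombus; in the second case `dist v₂ v₅ = 1` forces `v₅ = v₃`.
This leaves `4 + 2` branches, each a continuous image of the circle, and they are told apart by
the locally constant data "`v₂ = v₄`?", "is `v₃` above the axis?", "is `v₅` above the axis?".
-/

open Real Set Function

section Topology

variable {X : Type*} [TopologicalSpace X]

theorem ConnectedComponents.natCard_eq_of_isPreconnected_fibers {ι : Type*} [TopologicalSpace ι]
    [DiscreteTopology ι] {f : X → ι} (hf : Continuous f) (hsurj : Surjective f)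
    (hfib : ∀ i, IsPreconnected (f ⁻¹' {i})) :
    Nat.card (ConnectedComponents X) = Nat.card ι := by
  refine Nat.card_eq_of_bijective hf.connectedComponentsLift ⟨fun a b hab => ?_, fun i => ?_⟩
  · obtain ⟨x, rfl⟩ := ConnectedComponents.surjective_coe a
    obtain ⟨y, rfl⟩ := ConnectedComponents.surjective_coe b
    exact ConnectedComponents.coe_eq_coe'.2 ((hfib (f y)).subset_connectedComponent rfl hab)
  · obtain ⟨x, rfl⟩ := hsurj i
    exact ⟨x, rfl⟩

theorem continuous_decide_of_isClopen {P : X → Prop} [DecidablePred P] (h : IsClopen {x | P x}) :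
    Continuous fun x => decide (P x) :=
  (continuous_bool_rng true).2 <| by
    simpa only [preimage, mem_singleton_iff, decide_eq_true_eq] using h

theorem isClopen_setOf_pos {f : X → ℝ} (hf : Continuous f) (h0 : ∀ x, f x ≠ 0) :
    IsClopen {x | 0 < f x} := by
  have : {x | 0 < f x} = {x | 0 ≤ f x} := by
    ext x
    exact (h0 x).symm.le_iff_lt.symm
  exact ⟨this ▸ isClosed_le continuous_const hf, isOpen_lt continuous_const hf⟩

theorem isClopen_setOf_eq_of_eq_or_eq {Y : Type*} [TopologicalSpace Y] [T2Space Y]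
    {f g h : X → Y} (hf : Continuous f) (hg : Continuous g) (hh : Continuous h)
    (hfgh : ∀ x, f x = g x ∨ f x = h x) (hgh : ∀ x, g x ≠ h x) : IsClopen {x | f x = g x} := by
  have : {x | f x = g x} = {x | f x ≠ h x} := by
    ext x
    exact ⟨fun hx hx' => hgh x (hx ▸ hx'), (hfgh x).resolve_right⟩
  exact ⟨isClosed_eq hf hg, this ▸ isOpen_ne_fun hf hh⟩

end Topology

local notation "ℝ²" => EuclideanSpace ℝ (Fin 2)

namespace EuclideanSpace

theorem ext_fin_two {x y : ℝ²} (h₀ : x 0 = y 0) (h₁ : x 1 = y 1) : x = y := by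
  ext i
  fin_cases i
  exacts [h₀, h₁]

theorem norm_eq_iff_fin_two {x : ℝ²} {l : ℝ} (hl : 0 ≤ l) :
    ‖x‖ = l ↔ x 0 ^ 2 + x 1 ^ 2 = l ^ 2 := by
  rw [← sq_eq_sq₀ (norm_nonneg _) hl, real_norm_sq_eq, Fin.sum_univ_two]

theorem dist_eq_iff_fin_two {x y : ℝ²} {l : ℝ} (hl : 0 ≤ l) :
    dist x y = l ↔ (x 0 - y 0) ^ 2 + (x 1 - y 1) ^ 2 = l ^ 2 := by
  rw [← sq_eq_sq₀ dist_nonneg hl, dist_sq_eq, Fin.sum_univ_two, Real.dist_eq, Real.dist_eq,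
    sq_abs, sq_abs]

theorem norm_one_zero : ‖(!₂[1, 0] : ℝ²)‖ = 1 := by
  rw [norm_eq_iff_fin_two zero_le_one]
  simp

end EuclideanSpace

open EuclideanSpace

theorem eq_zero_or_eq_add_of_dist_eq_one {q x : ℝ²} (hq : ‖q‖ = 1) (hq₁ : q ≠ !₂[1, 0])
    (h₁ : dist !₂[1, 0] x = 1) (h₂ : dist x q = 1) : x = 0 ∨ x = !₂[1, 0] + q := by
  rw [norm_eq_iff_fin_two zero_le_one] at hq
  rw [dist_eq_iff_fin_two zero_le_one] at h₁ h₂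
  simp only [Matrix.cons_val_zero, Matrix.cons_val_one] at h₁
  have ha : q 0 ≠ 1 := fun ha =>
    hq₁ (ext_fin_two (by simp [ha]) (by simpa using (show q 1 ^ 2 = 0 by rw [ha] at hq; linarith)))
  have hcirc : x 0 ^ 2 + x 1 ^ 2 = 2 * x 0 := by linear_combination h₁
  have hline : x 0 * (1 - q 0) = q 1 * x 1 := by linear_combination (h₂ - h₁ - hq) / 2
  have key : x 0 * ((1 - q 0) * x 0 - q 1 ^ 2) = 0 := by
    linear_combination (q 1 ^ 2 * hcirc + (x 0 * (1 - q 0) + q 1 * x 1) * hline - x 0 ^ 2 * hq) / 2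
  rcases mul_eq_zero.1 key with hx | hx
  · left
    have : x 1 ^ 2 = 0 := by rw [hx] at hcirc; linarith
    exact ext_fin_two (by simp [hx]) (by simpa using this)
  · right
    have hx₀ : x 0 = 1 + q 0 :=
      mul_left_cancel₀ (sub_ne_zero.2 ha.symm) (by linear_combination hx + hq)
    have hx₁ : q 1 * x 1 = q 1 * q 1 := by rw [← hline, hx₀]; linear_combination -hq
    have hx₁' : (x 1 - q 1) ^ 2 = 0 := by
      linear_combination hcirc - 2 * hx₁ + (1 - x 0 - q 0) * hx₀ - hq
    exact ext_fin_two (by simp [hx₀]) (by simpa [sub_eq_zero] using hx₁')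

namespace K33Pinned

/-- For `w ≠ 0`, the point `x` with `⟪x, w⟫ = c` and `w₀ x₁ - w₁ x₀ = s`. -/
noncomputable def ofDotCross (w : ℝ²) (c s : ℝ) : ℝ² :=
  !₂[(c * w 0 - s * w 1) / (w 0 ^ 2 + w 1 ^ 2), (c * w 1 + s * w 0) / (w 0 ^ 2 + w 1 ^ 2)]

theorem ofDotCross_dot_cross (x w : ℝ²) (hw : w 0 ^ 2 + w 1 ^ 2 ≠ 0) :
    ofDotCross w (x 0 * w 0 + x 1 * w 1) (w 0 * x 1 - w 1 * x 0) = x := by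
  refine ext_fin_two ?_ ?_ <;>
  · simp only [ofDotCross, PiLp.toLp_apply, Matrix.cons_val_zero, Matrix.cons_val_one]
    field_simp
    ring

theorem sq_add_sq_ofDotCross (w : ℝ²) (c s : ℝ) (hw : w 0 ^ 2 + w 1 ^ 2 ≠ 0) :
    ofDotCross w c s 0 ^ 2 + ofDotCross w c s 1 ^ 2 = (c ^ 2 + s ^ 2) / (w 0 ^ 2 + w 1 ^ 2) := by
  simp only [ofDotCross, PiLp.toLp_apply, Matrix.cons_val_zero, Matrix.cons_val_one]
  field_simp
  ring

theorem ofDotCross_dot (w : ℝ²) (c s : ℝ) (hw : w 0 ^ 2 + w 1 ^ 2 ≠ 0) :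
    ofDotCross w c s 0 * w 0 + ofDotCross w c s 1 * w 1 = c := by
  simp only [ofDotCross, PiLp.toLp_apply, Matrix.cons_val_zero, Matrix.cons_val_one]
  field_simp
  ring

/-- A unit vector `x` is at distance `√2` from `w` iff `⟪x, w⟫ = chordDot w`; the two such
points are `chordPoint true w` and `chordPoint false w`, with cross product `w₀ x₁ - w₁ x₀`
equal to `±√(‖w‖² - chordDot w ^ 2)`. -/
noncomputable def chordDot (w : ℝ²) : ℝ := (w 0 ^ 2 + w 1 ^ 2 - 1) / 2

noncomputable def chordCross (up : Bool) (w : ℝ²) : ℝ :=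
  if up then √(w 0 ^ 2 + w 1 ^ 2 - chordDot w ^ 2) else -√(w 0 ^ 2 + w 1 ^ 2 - chordDot w ^ 2)

noncomputable def chordPoint (up : Bool) (w : ℝ²) : ℝ² :=
  ofDotCross w (chordDot w) (chordCross up w)

theorem norm_eq_one_and_dist_eq_sqrt_two_iff {x w : ℝ²} :
    ‖x‖ = 1 ∧ dist x w = √2 ↔ x 0 ^ 2 + x 1 ^ 2 = 1 ∧ x 0 * w 0 + x 1 * w 1 = chordDot w := by
  rw [norm_eq_iff_fin_two zero_le_one, dist_eq_iff_fin_two (sqrt_nonneg 2),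
    sq_sqrt zero_le_two, one_pow, chordDot]
  exact and_congr_right fun hx =>
    ⟨fun h => by linear_combination (hx - h) / 2, fun h => by linear_combination hx - 2 * h⟩

theorem continuous_chordPoint {α : Type*} [TopologicalSpace α] {g : α → ℝ²} (hg : Continuous g)
    (h : ∀ a, g a 0 ^ 2 + g a 1 ^ 2 ≠ 0) (up : Bool) :
    Continuous fun a => chordPoint up (g a) := by
  cases up <;>
    simp only [chordPoint, ofDotCross, chordCross, chordDot, if_true, Bool.false_eq_true,
      if_false] <;>
    fun_prop (disch := exact h _)

theorem chordPoint_apply_one (up : Bool) (w : ℝ²) :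
    chordPoint up w 1 = (chordDot w * w 1 + chordCross up w * w 0) / (w 0 ^ 2 + w 1 ^ 2) :=
  rfl

section Chord

/-! The hypothesis `|chordDot w| < w 0` holds for `w` near `(1, 0)`; it keeps the two chord
points off the x-axis and on opposite sides of it. -/

variable {w : ℝ²}

theorem sq_add_sq_pos (hw : |chordDot w| < w 0) : 0 < w 0 ^ 2 + w 1 ^ 2 := by
  have := (abs_nonneg _).trans_lt hw
  positivity

theorem sq_lt_sq_add_sq_sub_chordDot_sq (hw : |chordDot w| < w 0) :
    w 1 ^ 2 < w 0 ^ 2 + w 1 ^ 2 - chordDot w ^ 2 := by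
  have := sq_lt_sq' (abs_lt.1 hw).1 (abs_lt.1 hw).2
  linarith

theorem chordCross_sq (hw : |chordDot w| < w 0) (up : Bool) :
    chordCross up w ^ 2 = w 0 ^ 2 + w 1 ^ 2 - chordDot w ^ 2 := by
  have := (sq_nonneg (w 1)).trans_lt (sq_lt_sq_add_sq_sub_chordDot_sq hw)
  cases up <;> simp [chordCross, sq_sqrt this.le]

theorem chordPoint_mem (hw : |chordDot w| < w 0) (up : Bool) :
    ‖chordPoint up w‖ = 1 ∧ dist (chordPoint up w) w = √2 := by
  have hr := (sq_add_sq_pos hw).ne'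
  refine norm_eq_one_and_dist_eq_sqrt_two_iff.2 ⟨?_, ofDotCross_dot w _ _ hr⟩
  rw [chordPoint, sq_add_sq_ofDotCross w _ _ hr, chordCross_sq hw, add_sub_cancel, div_self hr]

theorem exists_eq_chordPoint (hw : |chordDot w| < w 0) {x : ℝ²} (hx : ‖x‖ = 1)
    (hxw : dist x w = √2) : ∃ up, x = chordPoint up w := by
  obtain ⟨hx₁, hdot⟩ := norm_eq_one_and_dist_eq_sqrt_two_iff.1 ⟨hx, hxw⟩
  have hcross : (w 0 * x 1 - w 1 * x 0) ^ 2 = chordCross true w ^ 2 := by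
    rw [chordCross_sq hw, ← hdot]
    linear_combination (w 0 ^ 2 + w 1 ^ 2) * hx₁
  obtain ⟨up, hup⟩ : ∃ up, w 0 * x 1 - w 1 * x 0 = chordCross up w := by
    rcases sq_eq_sq_iff_eq_or_eq_neg.1 hcross with h | h
    exacts [⟨true, h⟩, ⟨false, h⟩]
  refine ⟨up, ?_⟩
  rw [chordPoint, ← hdot, ← hup, ofDotCross_dot_cross x w (sq_add_sq_pos hw).ne']

theorem abs_chordDot_mul_lt (hw : |chordDot w| < w 0) :
    |chordDot w * w 1| < √(w 0 ^ 2 + w 1 ^ 2 - chordDot w ^ 2) * w 0 := by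
  have hv : |w 1| < √(w 0 ^ 2 + w 1 ^ 2 - chordDot w ^ 2) := by
    rw [← sqrt_sq_eq_abs]
    exact sqrt_lt_sqrt (sq_nonneg _) (sq_lt_sq_add_sq_sub_chordDot_sq hw)
  rw [abs_mul, mul_comm _ (w 0)]
  exact mul_lt_mul'' hw hv (abs_nonneg _) (abs_nonneg _)

theorem chordPoint_true_apply_one_pos (hw : |chordDot w| < w 0) : 0 < chordPoint true w 1 := by
  rw [chordPoint_apply_one, chordCross, if_pos rfl]
  exact div_pos (by linarith [(abs_lt.1 (abs_chordDot_mul_lt hw)).1]) (sq_add_sq_pos hw)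

theorem chordPoint_false_apply_one_neg (hw : |chordDot w| < w 0) : chordPoint false w 1 < 0 := by
  rw [chordPoint_apply_one, chordCross, if_neg Bool.false_ne_true]
  exact div_neg_of_neg_of_pos (by linarith [(abs_lt.1 (abs_chordDot_mul_lt hw)).2])
    (sq_add_sq_pos hw)

theorem chordPoint_apply_one_pos_iff (hw : |chordDot w| < w 0) (up : Bool) :
    0 < chordPoint up w 1 ↔ up = true := by
  cases up
  · simpa using (chordPoint_false_apply_one_neg hw).le
  · simpa using chordPoint_true_apply_one_pos hw

theorem chordPoint_apply_one_ne_zero (hw : |chordDot w| < w 0) (up : Bool) :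
    chordPoint up w 1 ≠ 0 := by
  cases up
  exacts [(chordPoint_false_apply_one_neg hw).ne, (chordPoint_true_apply_one_pos hw).ne']

theorem dist_add_chordPoint_ne_one (hw : |chordDot w| < w 0) (up : Bool) :
    dist (!₂[1, 0] + chordPoint up w) (chordPoint (!up) w) ≠ 1 := by
  intro h
  rw [dist_eq_iff_fin_two zero_le_one] at h
  have hcross : chordCross (!up) w = -chordCross up w := by cases up <;> simp [chordCross]
  have hr := (sq_add_sq_pos hw).ne'
  simp only [chordPoint, ofDotCross, hcross, PiLp.add_apply, PiLp.toLp_apply,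
    Matrix.cons_val_zero, Matrix.cons_val_one] at h
  field_simp at h
  have hs : chordCross up w * (chordCross up w - w 1) = 0 :=
    (mul_eq_zero.1 (by linear_combination h / 4 : (w 0 ^ 2 + w 1 ^ 2) * _ = 0)).resolve_left hr
  have hlt := sq_lt_sq_add_sq_sub_chordDot_sq hw
  rw [← chordCross_sq hw up] at hlt
  rcases mul_eq_zero.1 hs with hs | hs
  · nlinarith [sq_nonneg (w 1)]
  · rw [sub_eq_zero.1 hs] at hlt
    exact lt_irrefl _ hlt

end Chord

noncomputable def rimPoint (ε t : ℝ) : ℝ² := !₂[1 + ε * cos t, ε * sin t]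

theorem dist_rimPoint {ε : ℝ} (hε : 0 ≤ ε) (t : ℝ) : dist !₂[1, 0] (rimPoint ε t) = ε := by
  rw [dist_eq_iff_fin_two hε]
  simp only [rimPoint, PiLp.toLp_apply, Matrix.cons_val_zero, Matrix.cons_val_one]
  linear_combination ε ^ 2 * sin_sq_add_cos_sq t

theorem exists_rimPoint_eq {ε : ℝ} {w : ℝ²} (h : dist !₂[1, 0] w = ε) :
    ∃ t, rimPoint ε t = w := by
  set z : ℂ := ⟨w 0 - 1, w 1⟩
  have hε : 0 ≤ ε := h ▸ dist_nonneg
  have hz : ‖z‖ = ε := by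
    rw [dist_eq_iff_fin_two hε] at h
    rw [← sq_eq_sq₀ (norm_nonneg _) hε, Complex.sq_norm, Complex.normSq_apply, ← h]
    simp only [Matrix.cons_val_zero, Matrix.cons_val_one, Matrix.cons_val_fin_one, z]
    ring
  refine ⟨Complex.arg z, ext_fin_two ?_ ?_⟩
  · simp [rimPoint, ← hz, Complex.norm_mul_cos_arg, z]
  · simp [rimPoint, ← hz, Complex.norm_mul_sin_arg, z]

theorem continuous_rimPoint (ε : ℝ) : Continuous (rimPoint ε) := by
  unfold rimPoint
  fun_prop

theorem abs_chordDot_rimPoint_lt {ε : ℝ} (hε : |ε| < 1 / 2) (t : ℝ) :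
    |chordDot (rimPoint ε t)| < rimPoint ε t 0 := by
  have hdot : chordDot (rimPoint ε t) = ε * cos t + ε ^ 2 / 2 := by
    simp only [chordDot, rimPoint, PiLp.toLp_apply, Matrix.cons_val_zero, Matrix.cons_val_one]
    linear_combination ε ^ 2 / 2 * sin_sq_add_cos_sq t
  have hcos : |ε * cos t| ≤ |ε| := by
    rw [abs_mul]
    exact mul_le_of_le_one_right (abs_nonneg _) (abs_cos_le_one t)
  have hε2 : ε ^ 2 < 1 / 4 := by nlinarith [sq_abs ε, abs_nonneg ε]
  rw [hdot]
  simp only [rimPoint, PiLp.toLp_apply, Matrix.cons_val_zero]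
  exact abs_lt.2 ⟨by linarith [(abs_le.1 hcos).1, sq_nonneg ε], by linarith⟩

noncomputable def config (q₁ q₂ q₄ q₅ : ℝ²) : Fin 6 → ℝ² := ![!₂[1, 0], q₁, q₂, 0, q₄, q₅]

theorem eq_config_of_mem {a b c d e f β γ : ℝ} {p : Fin 6 → ℝ²}
    (hp : p ∈ K33PinnedConfig a b c d e f 1 β γ) : p = config (p 1) (p 2) (p 4) (p 5) := by
  obtain ⟨h₃, h₀, -⟩ := hp
  funext i
  fin_cases i
  exacts [WithLp.ofLp_injective 2 h₀, rfl, rfl, h₃, rfl, rfl]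

theorem config_mem_iff {a b c d e f β γ : ℝ} {q₁ q₂ q₄ q₅ : ℝ²} :
    config q₁ q₂ q₄ q₅ ∈ K33PinnedConfig a b c d e f 1 β γ ↔
      dist !₂[1, 0] q₅ = a ∧ dist !₂[1, 0] q₁ = b ∧ dist q₁ q₂ = c ∧ ‖q₂‖ = d ∧ ‖q₄‖ = e ∧
        dist q₄ q₅ = f ∧ dist q₂ q₅ = β ∧ dist q₁ q₄ = γ := by
  simp [K33PinnedConfig, config, norm_one_zero]

abbrev pinnedSpace (ε : ℝ) : Set (Fin 6 → ℝ²) := K33PinnedConfig ε 1 1 1 1 √2 1 √2 1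

/-- `inl (up₃, up₅)`: `p(v₂) = p(v₄)`, with `v₃` and `v₅` above (`true`) or below the x-axis;
`inr up₃`: `p(v₂) = p(v₁) + p(v₃)` closes the rhombus `v₄v₁v₂v₃`, and then `p(v₅) = p(v₃)`. -/
abbrev Branch := Bool × Bool ⊕ Bool

noncomputable def branchConfig (ε : ℝ) : Branch → ℝ → Fin 6 → ℝ²
  | .inl (up₃, up₅), t =>
    config 0 (chordPoint up₃ (rimPoint ε t)) (chordPoint up₅ (rimPoint ε t)) (rimPoint ε t)
  | .inr up₃, t =>
    config (!₂[1, 0] + chordPoint up₃ (rimPoint ε t)) (chordPoint up₃ (rimPoint ε t))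
      (chordPoint up₃ (rimPoint ε t)) (rimPoint ε t)

def Branch.ofSigns : Bool → Bool → Bool → Branch
  | true, up₃, up₅ => .inl (up₃, up₅)
  | false, up₃, _ => .inr up₃

open scoped Classical in
noncomputable def branchOf (p : Fin 6 → ℝ²) : Branch :=
  Branch.ofSigns (decide (p 1 = 0)) (decide (0 < p 2 1)) (decide (0 < p 4 1))

section Branches

variable {ε : ℝ}

theorem branchConfig_mem (hε₀ : 0 ≤ ε) (hε : ε < 1 / 2) (b : Branch) (t : ℝ) :
    branchConfig ε b t ∈ pinnedSpace ε := by
  have hw := abs_chordDot_rimPoint_lt (abs_lt.2 ⟨by linarith, hε⟩) t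
  rcases b with ⟨up₃, up₅⟩ | up₃
  · obtain ⟨n₃, d₃⟩ := chordPoint_mem hw up₃
    obtain ⟨n₅, d₅⟩ := chordPoint_mem hw up₅
    exact config_mem_iff.2 ⟨dist_rimPoint hε₀ t, by rw [dist_zero_right, norm_one_zero],
      by rw [dist_zero_left, n₃], n₃, n₅, d₅, d₃, by rw [dist_zero_left, n₅]⟩
  · obtain ⟨n, d⟩ := chordPoint_mem hw up₃
    exact config_mem_iff.2 ⟨dist_rimPoint hε₀ t, by rw [dist_self_add_right, n],
      by rw [dist_add_self_left, norm_one_zero], n, n, d, d,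
      by rw [dist_add_self_left, norm_one_zero]⟩

theorem exists_branchConfig_eq (hε : ε < 1 / 2) {p : Fin 6 → ℝ²} (hp : p ∈ pinnedSpace ε) :
    ∃ b t, branchConfig ε b t = p := by
  have hpc := eq_config_of_mem hp
  rw [hpc] at hp ⊢
  obtain ⟨h₆, h₂, h₂₃, h₃, h₅, h₅₆, h₃₆, h₂₅⟩ := config_mem_iff.1 hp
  obtain ⟨t, ht⟩ := exists_rimPoint_eq h₆
  have hw := abs_chordDot_rimPoint_lt (abs_lt.2 ⟨by linarith [h₆ ▸ dist_nonneg], hε⟩) t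
  rw [← ht] at h₅₆ h₃₆ ⊢
  obtain ⟨up₃, e₃⟩ := exists_eq_chordPoint hw h₃ h₃₆
  obtain ⟨up₅, e₅⟩ := exists_eq_chordPoint hw h₅ h₅₆
  have hq : p 2 ≠ !₂[1, 0] := fun h => chordPoint_apply_one_ne_zero hw up₃ (by simp [← e₃, h])
  rcases eq_zero_or_eq_add_of_dist_eq_one h₃ hq h₂ h₂₃ with h | h
  · exact ⟨.inl (up₃, up₅), t, by rw [h, e₃, e₅]; rfl⟩
  · obtain rfl : up₅ = up₃ := by
      by_contra hne
      rw [h, e₃, e₅, Bool.eq_not.2 hne] at h₂₅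
      exact dist_add_chordPoint_ne_one hw up₃ h₂₅
    exact ⟨.inr up₅, t, by rw [h, e₃, e₅]; rfl⟩

theorem branchOf_branchConfig (hε : |ε| < 1 / 2) (b : Branch) (t : ℝ) :
    branchOf (branchConfig ε b t) = b := by
  have hw := abs_chordDot_rimPoint_lt hε t
  rcases b with ⟨up₃, up₅⟩ | up₃
  · simp [branchOf, branchConfig, config, chordPoint_apply_one_pos_iff hw, Branch.ofSigns]
  · have : !₂[1, 0] + chordPoint up₃ (rimPoint ε t) ≠ 0 := fun h =>
      chordPoint_apply_one_ne_zero hw up₃ (by simpa using congrArg (· 1) h)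
    simp [branchOf, branchConfig, config, chordPoint_apply_one_pos_iff hw, Branch.ofSigns, this]

theorem continuous_branchConfig (hε : |ε| < 1 / 2) (b : Branch) :
    Continuous (branchConfig ε b) := by
  have hchord := continuous_chordPoint (continuous_rimPoint ε)
    fun t => (sq_add_sq_pos (abs_chordDot_rimPoint_lt hε t)).ne'
  have hrim := continuous_rimPoint ε
  rcases b with ⟨up₃, up₅⟩ | up₃ <;>
    change Continuous fun t => branchConfig ε _ t <;>
    simp only [branchConfig, config] <;>
    fun_prop

theorem apply_one_eq_zero_or_eq_add_of_mem (hε : ε < 1 / 2) {p : Fin 6 → ℝ²}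
    (hp : p ∈ pinnedSpace ε) : p 1 = 0 ∨ p 1 = !₂[1, 0] + p 2 := by
  obtain ⟨⟨up₃, up₅⟩ | up₃, t, rfl⟩ := exists_branchConfig_eq hε hp <;>
    simp [branchConfig, config]

theorem apply_apply_one_ne_zero_of_mem (hε : ε < 1 / 2) {p : Fin 6 → ℝ²}
    (hp : p ∈ pinnedSpace ε) {i : Fin 6} (hi : i = 2 ∨ i = 4) : p i 1 ≠ 0 := by
  have hε₀ : 0 ≤ ε := hp.2.2.1 ▸ dist_nonneg
  have hw := abs_chordDot_rimPoint_lt (abs_lt.2 ⟨by linarith, hε⟩)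
  obtain ⟨⟨up₃, up₅⟩ | up₃, t, rfl⟩ := exists_branchConfig_eq hε hp <;>
    rcases hi with rfl | rfl <;>
    simp [branchConfig, config, chordPoint_apply_one_ne_zero (hw t)]

open scoped Classical in
theorem continuous_branchOf (hε : ε < 1 / 2) :
    Continuous fun p : pinnedSpace ε => branchOf p := by
  have hc : ∀ i, Continuous fun p : pinnedSpace ε => (p : Fin 6 → ℝ²) i :=
    fun i => (continuous_apply i).comp continuous_subtype_val
  have hc' : ∀ i j, Continuous fun p : pinnedSpace ε => (p : Fin 6 → ℝ²) i j := fun i j =>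
    (by fun_prop : Continuous fun q : ℝ² => q j).comp (hc i)
  have hne := fun (p : pinnedSpace ε) i hi => apply_apply_one_ne_zero_of_mem hε p.2 (i := i) hi
  have h₂ := isClopen_setOf_eq_of_eq_or_eq (hc 1) continuous_const (continuous_const.add (hc 2))
    (fun p => apply_one_eq_zero_or_eq_add_of_mem hε p.2)
    (fun p h => hne p 2 (.inl rfl) (by simpa using congrArg (· 1) h.symm))
  have h₃ := isClopen_setOf_pos (hc' 2 1) fun p => hne p 2 (.inl rfl)
  have h₅ := isClopen_setOf_pos (hc' 4 1) fun p => hne p 4 (.inr rfl)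
  exact (continuous_of_discreteTopology
    (f := fun x : Bool × Bool × Bool => Branch.ofSigns x.1 x.2.1 x.2.2)).comp
    ((continuous_decide_of_isClopen h₂).prodMk
      ((continuous_decide_of_isClopen h₃).prodMk (continuous_decide_of_isClopen h₅)))

theorem preimage_branchOf_eq_range (hε₀ : 0 ≤ ε) (hε : ε < 1 / 2) (b : Branch) :
    (fun p : pinnedSpace ε => branchOf p) ⁻¹' {b} =
      range fun t => (⟨branchConfig ε b t, branchConfig_mem hε₀ hε b t⟩ : pinnedSpace ε) := by
  have hε' : |ε| < 1 / 2 := abs_lt.2 ⟨by linarith, hε⟩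
  ext ⟨p, hp⟩
  constructor
  · rintro (hb : branchOf p = b)
    obtain ⟨b', t, rfl⟩ := exists_branchConfig_eq hε hp
    rw [branchOf_branchConfig hε'] at hb
    exact ⟨t, by subst hb; rfl⟩
  · rintro ⟨t, ht⟩
    cases ht
    exact branchOf_branchConfig hε' b t

end Branches

end K33Pinned

open K33Pinned in
/-- **Example: six connected components.** For all sufficiently small `ε > 0`
there is a choice of `γ ≥ 0` such that the pinned configuration space of
`(K_{3,3}, l)` with lengths `a = ε`, `b = c = d = e = α = 1`, `f = β = √2`,
`l(v₂v₅) = γ` has exactly six connected components. -/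
theorem K33_pinned_six_components :
    ∃ ε₀ > (0 : ℝ), ∀ ε : ℝ, 0 < ε → ε < ε₀ → ∃ γ : ℝ, 0 ≤ γ ∧
      Nat.card (ConnectedComponents (K33PinnedConfig ε 1 1 1 1
        (Real.sqrt 2) 1 (Real.sqrt 2) γ)) = 6 := by
  refine ⟨1 / 2, by norm_num, fun ε hε₀ hε => ⟨1, zero_le_one, ?_⟩⟩
  have hε' : |ε| < 1 / 2 := abs_lt.2 ⟨by linarith, hε⟩
  calc Nat.card (ConnectedComponents (pinnedSpace ε))
      = Nat.card Branch := by
        refine ConnectedComponents.natCard_eq_of_isPreconnected_fibers (continuous_branchOf hε)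
          (fun b => ⟨⟨_, branchConfig_mem hε₀.le hε b 0⟩, branchOf_branchConfig hε' b 0⟩)
          (fun b => ?_)
        rw [preimage_branchOf_eq_range hε₀.le hε b]
        exact isPreconnected_range ((continuous_branchConfig hε' b).subtype_mk _)
    _ = 6 := by simp
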